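/- arXiv:2504.00612 — 5 statements merged into one kernel-verified Lean document; each statement's English description precedes it below -/
import Mathlib

section
/- For any two conjunctive queries (finite directed edge-labelled multigraphs with distinguished output tuples) γ and δ, γ is semantically equivalent to δ (i.e., they have the same evaluation on every graph database) if and only if there exist homomorphisms γ → δ and δ → γ. -/
/-- A graph database over alphabet `A`: an edge-labelled directed graph. -/
structure DB (A : Type) where
  V : Type
  edge : V → A → V → Prop

/-- `G.path w u v`: there is a directed path from `u` to `v` labelled by the word `w`. -/
def DB.path {A : Type} (G : DB A) : List A → G.V → G.V → Prop
  | [], u, v => u = v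
  | a :: w, u, v => ∃ x, G.edge u a x ∧ DB.path G w x v

/-- A conjunctive query over alphabet `A` with `n` output variables. -/
structure CQ (A : Type) (n : ℕ) where
  V : Type
  finV : Finite V
  atoms : Set (V × A × V)
  finAtoms : atoms.Finite
  out : Fin n → V

/-- Evaluation: the tuple `t` satisfies `γ` on `G`. -/
def CQ.sat {A : Type} {n : ℕ} (γ : CQ A n) (G : DB A) (t : Fin n → G.V) : Prop :=
  ∃ h : γ.V → G.V, (∀ i, h (γ.out i) = t i) ∧ ∀ p ∈ γ.atoms, G.edge (h p.1) p.2.1 (h p.2.2)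

/-- A homomorphism of CQs: preserves atoms and output variables pointwise. -/
def CQHom {A : Type} {n : ℕ} (γ δ : CQ A n) (f : γ.V → δ.V) : Prop :=
  (∀ i, f (γ.out i) = δ.out i) ∧ ∀ p ∈ γ.atoms, (f p.1, p.2.1, f p.2.2) ∈ δ.atoms

/-! A homomorphism `γ → δ` pulls every satisfying assignment of `δ` back to one of `γ`, so
homomorphisms both ways give equivalence. Conversely, `δ` holds of its own outputs in its canonical
database via the identity, and a satisfying assignment of `γ` there is exactly a homomorphism
`γ → δ`. -/

section
variable {A : Type} {n : ℕ}

def CQ.canonDB (γ : CQ A n) : DB A where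
  V := γ.V
  edge u a v := (u, a, v) ∈ γ.atoms

theorem CQHom.id (γ : CQ A n) : CQHom γ γ id :=
  ⟨fun _ => rfl, fun _ hp => hp⟩

theorem CQHom.sat_of_sat {γ δ : CQ A n} {f : γ.V → δ.V} (hf : CQHom γ δ f)
    {G : DB A} {t : Fin n → G.V} (hδ : δ.sat G t) : γ.sat G t := by
  obtain ⟨h, h_out, h_atoms⟩ := hδ
  exact ⟨h ∘ f, fun i => by rw [Function.comp_apply, hf.1 i, h_out i],
    fun p hp => h_atoms _ (hf.2 p hp)⟩

theorem CQ.sat_canonDB_iff (γ δ : CQ A n) : γ.sat δ.canonDB δ.out ↔ ∃ f, CQHom γ δ f :=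
  Iff.rfl

theorem CQ.sat_canonDB_self (γ : CQ A n) : γ.sat γ.canonDB γ.out :=
  (γ.sat_canonDB_iff γ).mpr ⟨id, CQHom.id γ⟩

end

/-- Chandra–Merlin: two CQs are semantically equivalent iff there are homomorphisms
in both directions. -/
theorem cq_equiv_iff_homs_both_ways {A : Type} {n : ℕ} (γ δ : CQ A n) :
    (∀ (G : DB A) (t : Fin n → G.V), γ.sat G t ↔ δ.sat G t) ↔
      ((∃ f, CQHom γ δ f) ∧ (∃ g, CQHom δ γ g)) := by
  constructor
  · intro h_equiv
    exact ⟨(γ.sat_canonDB_iff δ).mp ((h_equiv _ _).mpr δ.sat_canonDB_self),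
      (δ.sat_canonDB_iff γ).mp ((h_equiv _ _).mp γ.sat_canonDB_self)⟩
  · rintro ⟨⟨f, hf⟩, ⟨g, hg⟩⟩ G t
    exact ⟨hg.sat_of_sat, hf.sat_of_sat⟩
end

section
/- The segments of a CRPQ γ, viewed as sets of atoms, form a partition of the set of atoms of γ. -/
/-- A finite directed multigraph with a distinguished set of output vertices. -/
structure MGraph where
  V : Type
  E : Type
  src : E → V
  tgt : E → V
  out : Set V

namespace MGraph

/-- An internal vertex: a non-output vertex of in-degree 1 and out-degree 1. -/
def Internal (G : MGraph) (v : G.V) : Prop :=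
  v ∉ G.out ∧ (∃! e, G.tgt e = v) ∧ (∃! e, G.src e = v)

def External (G : MGraph) (v : G.V) : Prop := ¬ G.Internal v

/-- A list of edges forms a directed walk. -/
def IsWalk (G : MGraph) : List G.E → Prop
  | [] => True
  | [_] => True
  | e₁ :: e₂ :: es => G.tgt e₁ = G.src e₂ ∧ G.IsWalk (e₂ :: es)

/-- The list of vertices visited by a walk. -/
def walkVerts (G : MGraph) : List G.E → List G.V
  | [] => []
  | e :: es => G.src e :: G.tgt e :: es.map G.tgt

/-- A one-way internal path: a nonempty simple directed path all of whose intermediate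
vertices are internal (the first and last vertex may coincide). -/
def IsInternalPath (G : MGraph) (es : List G.E) : Prop :=
  es ≠ [] ∧ G.IsWalk es ∧
  (∀ v ∈ (G.walkVerts es).tail.dropLast, G.Internal v) ∧
  (G.walkVerts es).tail.Nodup ∧ (G.walkVerts es).dropLast.Nodup

/-- A segment: a maximal one-way internal path. -/
def IsSegment (G : MGraph) (es : List G.E) : Prop :=
  G.IsInternalPath es ∧ (∀ e, ¬ G.IsInternalPath (e :: es)) ∧
  (∀ e, ¬ G.IsInternalPath (es ++ [e]))

def firstV (G : MGraph) (es : List G.E) : Option G.V := es.head?.map G.src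

def lastV (G : MGraph) (es : List G.E) : Option G.V := es.getLast?.map G.tgt

end MGraph

/-- The number of segments of a multigraph, counting segments as sets of edges. -/
noncomputable def segCount (G : MGraph) : ℕ :=
  {S : Set G.E | ∃ es, G.IsSegment es ∧ S = {e | e ∈ es}}.ncard

/-!
Call `f` the successor of `e` when `e` ends in the internal vertex where `f` starts. Since an
internal vertex has exactly one incoming and one outgoing edge, this relation is a partial
injection, and the internal paths are exactly the nonempty duplicate-free successor chains
(a repeated vertex other than the endpoints would be internal and force a repeated edge). A
segment is then closed under successors and predecessors: a successor of an inner edge is its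
neighbour in the segment, and one of the last edge could otherwise be appended. Hence every
internal path meeting a segment lies inside it, so two segments sharing an edge coincide; and a
longest internal path through a given edge, which exists by finiteness, is a segment.
-/

namespace List

variable {α β : Type*} {r : α → α → Prop} {l : List α}

theorem nodup_map_of_isChain {f : α → β} (hl : l.IsChain r) (hd : l.Nodup)
    (hf : ∀ ⦃x y z⦄, r x y → f z = f x → z = x) : (l.map f).Nodup := by
  induction l with
  | nil => simp
  | cons a t ih =>
    obtain ⟨hhead, ht⟩ := isChain_cons.1 hl
    obtain ⟨ha, htd⟩ := nodup_cons.1 hd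
    refine nodup_cons.2 ⟨fun hmem => ?_, ih ht htd⟩
    obtain ⟨z, hz, hza⟩ := mem_map.1 hmem
    cases t with
    | nil => simp at hz
    | cons b t => exact ha (hf (hhead b rfl) hza ▸ hz)

theorem IsChain.forall_of_mem {p : α → Prop} {a : α} (hl : l.IsChain r)
    (fwd : ∀ ⦃x y⦄, r x y → p x → p y) (bwd : ∀ ⦃x y⦄, r x y → p y → p x)
    (ha : a ∈ l) (hpa : p a) : ∀ x ∈ l, p x := by
  obtain ⟨s, t, rfl⟩ := append_of_mem ha
  obtain ⟨hs, ht⟩ := isChain_split.1 hl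
  intro x hx
  rcases mem_append.1 hx with hx | hx
  · exact hs.backwards_concat_induction p s bwd hpa x hx
  · exact ht.induction p _ fwd (fun _ => hpa) x hx

end List

namespace MGraph

variable {G : MGraph} {v : G.V} {e f x : G.E} {es fs : List G.E}

theorem Internal.eq_of_tgt_eq (h : G.Internal v) (he : G.tgt e = v) (hf : G.tgt f = v) :
    e = f :=
  h.2.1.unique he hf

theorem Internal.eq_of_src_eq (h : G.Internal v) (he : G.src e = v) (hf : G.src f = v) :
    e = f :=
  h.2.2.unique he hf

variable (G) in
def Next (e f : G.E) : Prop := G.tgt e = G.src f ∧ G.Internal (G.tgt e)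

theorem Next.internal_src (h : G.Next e f) : G.Internal (G.src f) := h.1 ▸ h.2

theorem Next.right_unique {f' : G.E} (h : G.Next e f) (h' : G.Next e f') : f = f' :=
  h.2.eq_of_src_eq h.1.symm h'.1.symm

theorem Next.left_unique {e' : G.E} (h : G.Next e f) (h' : G.Next e' f) : e = e' :=
  h.internal_src.eq_of_tgt_eq h.1 h'.1

theorem isChain_next_iff :
    ∀ {es : List G.E}, es.IsChain G.Next ↔ G.IsWalk es ∧ ∀ e ∈ es.dropLast, G.Internal (G.tgt e)
  | [] | [_] => by simp [IsWalk]
  | a :: b :: t => by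
    rw [List.isChain_cons_cons, isChain_next_iff (es := b :: t)]
    simp only [Next, IsWalk, List.dropLast_cons_cons, List.mem_cons, forall_eq_or_imp]
    tauto

theorem dropLast_walkVerts :
    ∀ {es : List G.E}, G.IsWalk es → (G.walkVerts es).dropLast = es.map G.src
  | [], _ | [_], _ => rfl
  | a :: b :: t, ⟨hab, hw⟩ => by
    have ih := dropLast_walkVerts hw
    simp only [walkVerts, List.map_cons, List.dropLast_cons_cons] at ih ⊢
    rw [hab, ih]

theorem isInternalPath_iff : G.IsInternalPath es ↔ es ≠ [] ∧ es.IsChain G.Next ∧ es.Nodup := by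
  rcases es with _ | ⟨a, t⟩
  · simp [IsInternalPath]
  have htail : (G.walkVerts (a :: t)).tail = (a :: t).map G.tgt := rfl
  simp only [IsInternalPath, htail, ← List.map_dropLast, List.forall_mem_map, ne_eq,
    List.cons_ne_nil, not_false_eq_true, true_and, isChain_next_iff]
  constructor
  · rintro ⟨hw, hint, hnd, -⟩
    exact ⟨⟨hw, hint⟩, hnd.of_map _⟩
  · rintro ⟨⟨hw, hint⟩, hnd⟩
    have hch : (a :: t).IsChain G.Next := isChain_next_iff.2 ⟨hw, hint⟩
    refine ⟨hw, hint, List.nodup_map_of_isChain hch hnd fun _ _ _ h hz => ?_, ?_⟩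
    · exact h.2.eq_of_tgt_eq hz rfl
    · rw [dropLast_walkVerts hw, ← List.nodup_reverse, ← List.map_reverse]
      exact List.nodup_map_of_isChain (List.isChain_reverse.2 hch) (List.nodup_reverse.2 hnd)
        fun _ _ _ h hz => h.internal_src.eq_of_src_eq hz rfl

theorem isInternalPath_singleton (e : G.E) : G.IsInternalPath [e] :=
  isInternalPath_iff.2 ⟨List.cons_ne_nil _ _, List.isChain_singleton e, List.nodup_singleton e⟩

theorem IsSegment.mem_of_mem_of_next (hs : G.IsSegment es) (hx : x ∈ es) (hxf : G.Next x f) :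
    f ∈ es := by
  obtain ⟨-, hch, hnd⟩ := isInternalPath_iff.1 hs.1
  obtain ⟨p, s, rfl⟩ := List.append_of_mem hx
  rcases s with _ | ⟨y, s⟩
  · by_contra hf
    refine hs.2.2 f (isInternalPath_iff.2 ⟨by simp, hch.append (.singleton f) (by simp [hxf]), ?_⟩)
    refine List.nodup_append.2 ⟨hnd, List.nodup_singleton f, fun a ha b hb hab => hf ?_⟩
    rwa [hab, List.mem_singleton.1 hb] at ha
  · have hxy : G.Next x y := (List.isChain_cons_cons.1 (List.isChain_split.1 hch).2).1
    simp [hxf.right_unique hxy]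

theorem IsSegment.mem_of_next_of_mem (hs : G.IsSegment es) (hfx : G.Next f x) (hx : x ∈ es) :
    f ∈ es := by
  obtain ⟨-, hch, hnd⟩ := isInternalPath_iff.1 hs.1
  obtain ⟨p, s, rfl⟩ := List.append_of_mem hx
  rcases p.eq_nil_or_concat' with rfl | ⟨p, w, rfl⟩
  · by_contra hf
    refine hs.2.1 f (isInternalPath_iff.2 ⟨by simp, hch.cons (by simpa using hfx), ?_⟩)
    exact List.nodup_cons.2 ⟨hf, hnd⟩
  · have hwx : G.Next w x := by
      rw [List.append_assoc, List.singleton_append] at hch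
      exact (List.isChain_append_cons_cons.1 hch).2.1
    simp [hfx.left_unique hwx]

theorem IsSegment.subset_of_isInternalPath (hs : G.IsSegment es) (hfs : G.IsInternalPath fs)
    (hxes : x ∈ es) (hxfs : x ∈ fs) : fs ⊆ es :=
  (isInternalPath_iff.1 hfs).2.1.forall_of_mem (fun _ _ h hy => hs.mem_of_mem_of_next hy h)
    (fun _ _ h hx => hs.mem_of_next_of_mem h hx) hxfs hxes

theorem exists_isSegment_mem [Finite G.E] (e : G.E) : ∃ es, G.IsSegment es ∧ e ∈ es := by
  have hfin : {l : List G.E | G.IsInternalPath l ∧ e ∈ l}.Finite :=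
    (List.finite_length_le G.E (Nat.card G.E)).subset fun l hl =>
      (isInternalPath_iff.1 hl.1).2.2.length_le_natCard
  obtain ⟨es, ⟨hes, he⟩, hmax⟩ :=
    Set.exists_max_image _ List.length hfin
      ⟨[e], isInternalPath_singleton e, List.mem_singleton_self e⟩
  refine ⟨es, ⟨hes, fun f hf => ?_, fun f hf => ?_⟩, he⟩
  · simpa using hmax (f :: es) ⟨hf, List.mem_cons_of_mem f he⟩
  · simpa using hmax (es ++ [f]) ⟨hf, List.mem_append_left _ he⟩

end MGraph

theorem segments_partition_atoms_general (G : MGraph) [Finite G.E] :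
    Setoid.IsPartition {S : Set G.E | ∃ es, G.IsSegment es ∧ S = {e | e ∈ es}} := by
  refine ⟨?_, fun e => ?_⟩
  · rintro ⟨es, hes, hempty⟩
    obtain ⟨x, hx⟩ := List.exists_mem_of_ne_nil es hes.1.1
    exact (hempty ▸ hx : x ∈ (∅ : Set G.E))
  · obtain ⟨es, hes, he⟩ := MGraph.exists_isSegment_mem e
    refine ⟨{x | x ∈ es}, ⟨⟨es, hes, rfl⟩, he⟩, ?_⟩
    rintro _ ⟨⟨fs, hfs, rfl⟩, he'⟩
    exact Set.Subset.antisymm (hes.subset_of_isInternalPath hfs.1 he he')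
      (hfs.subset_of_isInternalPath hes.1 he' he)

/-- The segments of a finite multigraph, viewed as sets of edges, partition its edge set. -/
theorem segments_partition_atoms (G : MGraph) [Finite G.V] [Finite G.E] :
    Setoid.IsPartition {S : Set G.E | ∃ es, G.IsSegment es ∧ S = {e | e ∈ es}} :=
  segments_partition_atoms_general G
end

section
/- Contraction of an internal variable preserves semantic equivalence of CRPQs: if γ' is obtained from CRPQ γ by replacing two distinct atoms x →L y and y →L' z (where y is an internal non-output variable with in-degree 1 and out-degree 1) by the single atom x →(L·L') z, then γ' is semantically equivalent to γ. -/
/-- A conjunctive regular path query: a finite directed multigraph whose edges (atoms)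
are labelled by languages, with a tuple of output variables. -/
structure CRPQ (A : Type) (n : ℕ) where
  V : Type
  I : Type
  finV : Finite V
  finI : Finite I
  src : I → V
  tgt : I → V
  lang : I → Set (List A)
  out : Fin n → V

/-- Satisfaction of a CRPQ on a database at an output tuple. -/
def CRPQ.sat {A : Type} {n : ℕ} (γ : CRPQ A n) (G : DB A) (t : Fin n → G.V) : Prop :=
  ∃ h : γ.V → G.V, (∀ k, h (γ.out k) = t k) ∧
    ∀ i, ∃ w ∈ γ.lang i, G.path w (h (γ.src i)) (h (γ.tgt i))

/-- A choice of expansion words: one word from each atom language. -/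
def CRPQ.IsExpansionWords {A : Type} {n : ℕ} (γ : CRPQ A n) (w : γ.I → List A) : Prop :=
  ∀ i, w i ∈ γ.lang i

/-- Satisfaction of the expansion of `γ` determined by the words `w`. -/
def CRPQ.expSat {A : Type} {n : ℕ} (γ : CRPQ A n) (w : γ.I → List A) (G : DB A)
    (t : Fin n → G.V) : Prop :=
  ∃ h : γ.V → G.V, (∀ k, h (γ.out k) = t k) ∧ ∀ i, G.path (w i) (h (γ.src i)) (h (γ.tgt i))

/-- A CQ is a CRPQ all of whose atom languages are single-letter singletons. -/
def CRPQ.IsCQ {A : Type} {n : ℕ} (η : CRPQ A n) : Prop := ∀ i, ∃ a : A, η.lang i = {[a]}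

/-- Concatenation of languages. -/
def Lconcat {A : Type} (L L' : Set (List A)) : Set (List A) :=
  {w | ∃ u ∈ L, ∃ v ∈ L', w = u ++ v}

open Classical in
/-- Contraction of the internal variable `γ.tgt i₁`: the consecutive atoms `i₁, i₂`
are replaced by a single atom labelled by the concatenated language, and the
internal variable is removed. -/
noncomputable def contractAt {A : Type} {n : ℕ} (γ : CRPQ A n) (i₁ i₂ : γ.I)
    (hne : i₁ ≠ i₂)
    (hout : ∀ k, γ.out k ≠ γ.tgt i₁)
    (hin : ∀ j, γ.tgt j = γ.tgt i₁ → j = i₁)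
    (hsrc : ∀ j, γ.src j = γ.tgt i₁ → j = i₂) : CRPQ A n where
  V := {v : γ.V // v ≠ γ.tgt i₁}
  I := {i : γ.I // i ≠ i₂}
  finV := by haveI := γ.finV; infer_instance
  finI := by haveI := γ.finI; infer_instance
  src i := ⟨γ.src i.1, fun h => i.2 (hsrc i.1 h)⟩
  tgt i :=
    if h : i.1 = i₁ then ⟨γ.tgt i₂, fun hc => hne (hin i₂ hc).symm⟩
    else ⟨γ.tgt i.1, fun hc => h (hin i.1 hc)⟩
  lang i := if i.1 = i₁ then Lconcat (γ.lang i₁) (γ.lang i₂) else γ.lang i.1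
  out k := ⟨γ.out k, hout k⟩

namespace DB

variable {A : Type} (G : DB A)

theorem path_append (u v : List A) (a c : G.V) :
    G.path (u ++ v) a c ↔ ∃ b, G.path u a b ∧ G.path v b c := by
  induction u generalizing a with
  | nil => simp [DB.path]
  | cons x u ih =>
    simp only [List.cons_append, DB.path, ih]
    exact ⟨fun ⟨m, hm, b, hmb, hbc⟩ => ⟨b, ⟨m, hm, hmb⟩, hbc⟩,
      fun ⟨b, ⟨m, hm, hmb⟩, hbc⟩ => ⟨m, hm, b, hmb, hbc⟩⟩

theorem exists_mem_Lconcat_path_iff (L L' : Set (List A)) (a c : G.V) :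
    (∃ w ∈ Lconcat L L', G.path w a c) ↔
      ∃ b, (∃ u ∈ L, G.path u a b) ∧ ∃ v ∈ L', G.path v b c := by
  constructor
  · rintro ⟨_, ⟨u, hu, v, hv, rfl⟩, huv⟩
    obtain ⟨b, hub, hvb⟩ := (G.path_append u v a c).1 huv
    exact ⟨b, ⟨u, hu, hub⟩, v, hv, hvb⟩
  · rintro ⟨b, ⟨u, hu, hub⟩, v, hv, hvb⟩
    exact ⟨u ++ v, ⟨u, hu, v, hv, rfl⟩, (G.path_append u v a c).2 ⟨b, hub, hvb⟩⟩

end DB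

namespace CRPQ

variable {A : Type} {n : ℕ}

def AtomSat (γ : CRPQ A n) (G : DB A) (h : γ.V → G.V) (i : γ.I) : Prop :=
  ∃ w ∈ γ.lang i, G.path w (h (γ.src i)) (h (γ.tgt i))

variable {γ : CRPQ A n} {i₁ i₂ : γ.I} {hne : i₁ ≠ i₂} {hout : ∀ k, γ.out k ≠ γ.tgt i₁}
  {hin : ∀ j, γ.tgt j = γ.tgt i₁ → j = i₁} {hsrc : ∀ j, γ.src j = γ.tgt i₁ → j = i₂}
  {G : DB A} {t : Fin n → G.V}

theorem contractAt_lang_self :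
    (contractAt γ i₁ i₂ hne hout hin hsrc).lang ⟨i₁, hne⟩ = Lconcat (γ.lang i₁) (γ.lang i₂) :=
  if_pos rfl

theorem atomSat_contractAt_self (g : γ.V → G.V) :
    (contractAt γ i₁ i₂ hne hout hin hsrc).AtomSat G (g ∘ Subtype.val) ⟨i₁, hne⟩ ↔
      ∃ w ∈ Lconcat (γ.lang i₁) (γ.lang i₂), G.path w (g (γ.src i₁)) (g (γ.tgt i₂)) := by
  simp [AtomSat, contractAt]

theorem atomSat_contractAt_of_ne (g : γ.V → G.V) (i : (contractAt γ i₁ i₂ hne hout hin hsrc).I)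
    (hi : i.1 ≠ i₁) :
    (contractAt γ i₁ i₂ hne hout hin hsrc).AtomSat G (g ∘ Subtype.val) i ↔ γ.AtomSat G g i.1 := by
  simp [AtomSat, contractAt, hi]

theorem sat_contractAt_of_sat (hpath : γ.tgt i₁ = γ.src i₂) :
    γ.sat G t → (contractAt γ i₁ i₂ hne hout hin hsrc).sat G t := by
  rintro ⟨g, hg_out, hg_atoms⟩
  refine ⟨g ∘ Subtype.val, hg_out, fun i => ?_⟩
  by_cases hi : i.1 = i₁
  · obtain ⟨i, hi₂⟩ := i
    subst hi
    refine (atomSat_contractAt_self g).2 ((G.exists_mem_Lconcat_path_iff _ _ _ _).2 ?_)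
    exact ⟨g (γ.tgt i), hg_atoms i, hpath ▸ hg_atoms i₂⟩
  · exact (atomSat_contractAt_of_ne g i hi).2 (hg_atoms i.1)

theorem sat_of_sat_contractAt (hpath : γ.tgt i₁ = γ.src i₂) :
    (contractAt γ i₁ i₂ hne hout hin hsrc).sat G t → γ.sat G t := by
  rintro ⟨h, hh_out, hh_atoms⟩
  have hself := hh_atoms ⟨i₁, hne⟩
  rw [contractAt_lang_self, G.exists_mem_Lconcat_path_iff] at hself
  obtain ⟨m, hm₁, hm₂⟩ := hself
  obtain ⟨g, rfl, hgm⟩ : ∃ g : γ.V → G.V, g ∘ Subtype.val = h ∧ g (γ.tgt i₁) = m :=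
    ⟨Function.extend Subtype.val h fun _ => m, Function.extend_comp Subtype.val_injective _ _,
      Function.extend_apply' _ _ _ fun ⟨v, hv⟩ => v.2 hv⟩
  have hsat₁ : γ.AtomSat G g i₁ := by
    rw [AtomSat, hgm]
    exact hm₁
  have hsat₂ : γ.AtomSat G g i₂ := by
    rw [AtomSat, ← hpath, hgm]
    simpa [contractAt] using hm₂
  refine ⟨g, hh_out, fun i => ?_⟩
  by_cases hi₁ : i = i₁
  · exact hi₁ ▸ hsat₁
  by_cases hi₂ : i = i₂
  · exact hi₂ ▸ hsat₂
  · exact (atomSat_contractAt_of_ne g ⟨i, hi₂⟩ hi₁).1 (hh_atoms ⟨i, hi₂⟩)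

end CRPQ

/-- Contracting an internal variable (replacing the two atoms `x →L y`, `y →L' z`
through the internal variable `y` by a single atom `x →(L·L') z`) preserves semantic
equivalence. -/
theorem contraction_preserves_equivalence {A : Type} {n : ℕ} (γ : CRPQ A n)
    (i₁ i₂ : γ.I) (hne : i₁ ≠ i₂)
    (hpath : γ.tgt i₁ = γ.src i₂)
    (hout : ∀ k, γ.out k ≠ γ.tgt i₁)
    (hin : ∀ j, γ.tgt j = γ.tgt i₁ → j = i₁)
    (hsrc : ∀ j, γ.src j = γ.tgt i₁ → j = i₂) :
    ∀ (G : DB A) (t : Fin n → G.V),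
      γ.sat G t ↔ (contractAt γ i₁ i₂ hne hout hin hsrc).sat G t :=
  fun _ _ => ⟨CRPQ.sat_contractAt_of_sat hpath, CRPQ.sat_of_sat_contractAt hpath⟩
end

section
/- Let γ be the Boolean CRPQ () = x →K y, and δ the Boolean CRPQ () = x →K y ∧ ⋀_{j=1}^p x →(A* Lⱼ A*) y, over alphabet A, where K and all Lⱼ are nonempty regular languages not containing the empty word. If K ⊆ A*(⋂ⱼ Lⱼ)A*, then δ is equivalent to γ, i.e., δ is equivalent to a CRPQ with a single atom. -/
/-- A language is regular if it is accepted by some NFA with finitely many states. -/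
def IsRegularLang {A : Type} (L : Set (List A)) : Prop :=
  ∃ (σ : Type) (_ : Fintype σ) (M : NFA A σ), ∀ w, w ∈ M.accepts ↔ w ∈ L

/-- The language `A* L A*`. -/
def AstarLAstar {A : Type} (L : Set (List A)) : Set (List A) :=
  {w | ∃ u x v, x ∈ L ∧ w = u ++ x ++ v}

/-- The Boolean CRPQ `() = x →K y` with a single atom and two distinct variables. -/
def singleAtomQ (A : Type) (K : Set (List A)) : CRPQ A 0 where
  V := Fin 2
  I := Fin 1
  finV := inferInstance
  finI := inferInstance
  src _ := 0
  tgt _ := 1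
  lang _ := K
  out k := k.elim0

/-- The Boolean CRPQ `() = ⋀ⱼ x →(L j) y` with two variables. -/
def multiAtomQ (A : Type) (p : ℕ) (L : Fin p → Set (List A)) : CRPQ A 0 where
  V := Fin 2
  I := Fin p
  finV := inferInstance
  finI := inferInstance
  src _ := 0
  tgt _ := 1
  lang j := L j
  out k := k.elim0

/-- The Boolean CRPQ `δ() = x →K y ∧ ⋀ⱼ x →(A* Lⱼ A*) y`. -/
def deltaQ (A : Type) (K : Set (List A)) (p : ℕ) (L : Fin p → Set (List A)) : CRPQ A 0 where
  V := Fin 2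
  I := Option (Fin p)
  finV := inferInstance
  finI := inferInstance
  src _ := 0
  tgt _ := 1
  lang i := match i with
    | none => K
    | some j => AstarLAstar (L j)
  out k := k.elim0

theorem AstarLAstar_mono {A : Type} {L L' : Set (List A)} (h : L ⊆ L') :
    AstarLAstar L ⊆ AstarLAstar L' := by
  rintro _ ⟨u, x, v, hx, rfl⟩
  exact ⟨u, x, v, h hx, rfl⟩

/-- The atoms `x →(A* Lⱼ A*) y` are implied by `x →K y`, witnessed by the very same path. -/
theorem deltaQ_sat_iff_singleAtomQ_sat {A : Type} {p : ℕ} {K : Set (List A)}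
    {L : Fin p → Set (List A)} (hK : ∀ j, K ⊆ AstarLAstar (L j)) (G : DB A) (t : Fin 0 → G.V) :
    (deltaQ A K p L).sat G t ↔ (singleAtomQ A K).sat G t := by
  constructor
  · rintro ⟨h, -, hatoms⟩
    exact ⟨h, fun k => k.elim0, fun _ => hatoms none⟩
  · rintro ⟨h, -, hatom⟩
    obtain ⟨w, hwK, hpath⟩ := hatom (0 : Fin 1)
    refine ⟨h, fun k => k.elim0, ?_⟩
    rintro (_ | j)
    · exact ⟨w, hwK, hpath⟩
    · exact ⟨w, hK j hwK, hpath⟩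

theorem delta_equiv_single_atom_general {A : Type} (p : ℕ)
    (K : Set (List A)) (L : Fin p → Set (List A))
    (hsub : K ⊆ {w | ∃ u x v, (∀ j, x ∈ L j) ∧ w = u ++ x ++ v}) :
    ∀ (G : DB A) (t : Fin 0 → G.V),
      (deltaQ A K p L).sat G t ↔ (singleAtomQ A K).sat G t :=
  deltaQ_sat_iff_singleAtomQ_sat fun j => hsub.trans (AstarLAstar_mono fun _ hx => hx j)

/-- If `K ⊆ A*(⋂ⱼ Lⱼ)A*` then `δ() = x →K y ∧ ⋀ⱼ x →(A* Lⱼ A*) y` is equivalent to the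
single-atom CRPQ `γ() = x →K y`. -/
theorem delta_equiv_single_atom {A : Type} (p : ℕ)
    (K : Set (List A)) (L : Fin p → Set (List A))
    (hKreg : IsRegularLang K) (hLreg : ∀ j, IsRegularLang (L j))
    (hKne : K.Nonempty) (hKeps : [] ∉ K)
    (hLne : ∀ j, (L j).Nonempty) (hLeps : ∀ j, [] ∉ L j)
    (hsub : K ⊆ {w | ∃ u x v, (∀ j, x ∈ L j) ∧ w = u ++ x ++ v}) :
    ∀ (G : DB A) (t : Fin 0 → G.V),
      (deltaQ A K p L).sat G t ↔ (singleAtomQ A K).sat G t :=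
  delta_equiv_single_atom_general p K L hsub
end

section
/- Let Γ and Δ be finite unions of CRPQs over finite alphabet A in which every atom language is either a single letter a, a⁺ for a letter a, or (for Δ only) A*. If Γ is not contained in Δ, then there exists an expansion ξ of Γ that is not contained in Δ and whose number of atoms is at most (max number of atoms of a disjunct of Γ) × (1 + max number of atoms of a disjunct of Δ). -/
/-- A single-letter language `{a}`. -/
def isLetterLang {A : Type} (L : Set (List A)) : Prop := ∃ a : A, L = {[a]}

/-- The language `a⁺` for a letter `a`. -/
def isPlusLang {A : Type} (L : Set (List A)) : Prop :=
  ∃ a : A, L = {w : List A | w ≠ [] ∧ ∀ c ∈ w, c = a}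

/-- The language `A*` of all words. -/
def isStarLang {A : Type} (L : Set (List A)) : Prop := L = Set.univ

/-- The maximum number of atoms of a disjunct of a union of CRPQs. -/
noncomputable def maxAtoms {A : Type} {n : ℕ} (Γ : List (CRPQ A n)) : ℕ :=
  (Γ.map fun γ => Nat.card γ.I).foldr max 0

/-! Take a counterexample expansion `w` of minimal total length. If some atom expansion were
`a^(m+1)` with `m > maxAtoms Δ`, shortening it to `a^m` would give a smaller expansion, hence
one contained in `Δ`: some `δ ∈ Δ` matches its canonical database. As `δ` has fewer than `m`
atoms, some vertex `e` of the `a^m`-path is the source of no atom of `δ`; subdividing the `e`-th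
edge turns the match into a match on the canonical database of `w`, because letter atoms keep
their edges while `a⁺`- and `A*`-atoms accept the longer paths. So `w` would be contained in `Δ`.
-/

variable {A : Type} {n : ℕ}

namespace DB

def IsHom (G₁ G₂ : DB A) (ψ : G₁.V → G₂.V) : Prop :=
  ∀ u a v, G₁.edge u a v → G₂.edge (ψ u) a (ψ v)

theorem path_singleton {G : DB A} {a : A} {p q : G.V} : G.path [a] p q ↔ G.edge p a q := by
  simp [DB.path]

theorem path_iff {G : DB A} {u : List A} {p q : G.V} :
    G.path u p q ↔ ∃ f : ℕ → G.V, f 0 = p ∧ f u.length = q ∧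
      ∀ k (hk : k < u.length), G.edge (f k) u[k] (f (k + 1)) := by
  induction u generalizing p with
  | nil => exact ⟨fun h => ⟨fun _ => p, rfl, h, by simp⟩, fun ⟨f, h0, hl, _⟩ => h0 ▸ hl⟩
  | cons a u ih =>
    constructor
    · rintro ⟨x, hx, hp⟩
      obtain ⟨f, rfl, hl, hf⟩ := ih.mp hp
      refine ⟨Nat.rec p fun k _ => f k, rfl, hl, fun k hk => ?_⟩
      cases k with
      | zero => exact hx
      | succ k => exact hf k (by simpa using hk)
    · rintro ⟨f, rfl, hl, hf⟩
      exact ⟨f 1, hf 0 (by simp), ih.mpr ⟨fun k => f (k + 1), rfl, hl,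
        fun k hk => hf (k + 1) (by simpa using hk)⟩⟩

theorem path.map {G₁ G₂ : DB A} {ψ : G₁.V → G₂.V} (hψ : IsHom G₁ G₂ ψ) {u : List A}
    {p q : G₁.V} (h : G₁.path u p q) : G₂.path u (ψ p) (ψ q) := by
  induction u generalizing p with
  | nil => exact congrArg ψ h
  | cons a u ih =>
    obtain ⟨x, hx, hp⟩ := h
    exact ⟨ψ x, hψ _ _ _ hx, ih hp⟩

theorem path.stretch {G₁ G₂ : DB A} {ψ : G₁.V → G₂.V}
    (hψ : ∀ p c q, G₁.edge p c q →
      G₂.edge (ψ p) c (ψ q) ∨ ∃ x, G₂.edge (ψ p) c x ∧ G₂.edge x c (ψ q))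
    {u : List A} {p q : G₁.V} (h : G₁.path u p q) :
    ∃ u', G₂.path u' (ψ p) (ψ q) ∧ u.length ≤ u'.length ∧ u' ⊆ u := by
  induction u generalizing p with
  | nil => exact ⟨[], congrArg ψ h, le_rfl, List.Subset.refl _⟩
  | cons a u ih =>
    obtain ⟨x, hx, hp⟩ := h
    obtain ⟨u', hu', hlen, hsub⟩ := ih hp
    rcases hψ _ _ _ hx with he | ⟨y, hy, hy'⟩
    · exact ⟨a :: u', ⟨ψ x, he, hu'⟩, by simpa using hlen, List.cons_subset_cons a hsub⟩
    · refine ⟨a :: a :: u', ⟨y, hy, ψ x, hy', hu'⟩, by simp; omega, ?_⟩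
      simpa [List.cons_subset] using List.subset_cons_of_subset a hsub

end DB

theorem isPlusLang.mem_of_subset {L : Set (List A)} (hL : isPlusLang L) {u u' : List A}
    (hu : u ∈ L) (hlen : u.length ≤ u'.length) (hsub : u' ⊆ u) : u' ∈ L := by
  obtain ⟨a, rfl⟩ := hL
  refine ⟨?_, fun c hc => hu.2 c (hsub hc)⟩
  rintro rfl
  exact hu.1 (List.eq_nil_of_length_eq_zero (Nat.le_zero.mp hlen))

theorem le_maxAtoms {Γ : List (CRPQ A n)} {γ : CRPQ A n} (h : γ ∈ Γ) :
    Nat.card γ.I ≤ maxAtoms Γ :=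
  List.le_max_of_le' 0 (List.mem_map_of_mem h) le_rfl

theorem finsum_length_update_lt {ι : Type*} [Finite ι] [DecidableEq ι] {w : ι → List A}
    {i₀ : ι} {u : List A} (h : u.length < (w i₀).length) :
    ∑ᶠ i, (Function.update w i₀ u i).length < ∑ᶠ i, (w i).length := by
  have := Fintype.ofFinite ι
  rw [finsum_eq_sum_of_fintype, finsum_eq_sum_of_fintype]
  refine Finset.sum_lt_sum (fun i _ => ?_) ⟨i₀, Finset.mem_univ _, by simpa using h⟩
  rcases eq_or_ne i i₀ with rfl | hi
  · simpa using h.le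
  · simp [hi]

theorem finsum_length_le {ι : Type*} [Finite ι] {w : ι → List A} {b : ℕ}
    (h : ∀ i, (w i).length ≤ b) : ∑ᶠ i, (w i).length ≤ Nat.card ι * b := by
  have := Fintype.ofFinite ι
  rw [finsum_eq_sum_of_fintype, Nat.card_eq_fintype_card, ← smul_eq_mul, ← Finset.card_univ]
  exact Finset.sum_le_card_nsmul _ _ _ fun i _ => h i

namespace CRPQ

theorem sat.map {δ : CRPQ A n} {G₁ G₂ : DB A} {ψ : G₁.V → G₂.V} (hψ : G₁.IsHom G₂ ψ)
    {t : Fin n → G₁.V} (h : δ.sat G₁ t) : δ.sat G₂ (ψ ∘ t) := by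
  obtain ⟨h₀, ht, hp⟩ := h
  refine ⟨ψ ∘ h₀, fun k => congrArg ψ (ht k), fun i => ?_⟩
  obtain ⟨u, hu, hpath⟩ := hp i
  exact ⟨u, hu, hpath.map hψ⟩

theorem sat_iff_exists_expSat {γ : CRPQ A n} {G : DB A} {t : Fin n → G.V} :
    γ.sat G t ↔ ∃ w, γ.IsExpansionWords w ∧ γ.expSat w G t := by
  constructor
  · rintro ⟨h₀, ht, hp⟩
    choose w hw hwp using hp
    exact ⟨w, hw, h₀, ht, hwp⟩
  · rintro ⟨w, hw, h₀, ht, hp⟩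
    exact ⟨h₀, ht, fun i => ⟨w i, hw i, hp i⟩⟩

def ExpContainedIn (γ : CRPQ A n) (w : γ.I → List A) (Δ : List (CRPQ A n)) : Prop :=
  ∀ (G : DB A) (t : Fin n → G.V), γ.expSat w G t → ∃ δ ∈ Δ, δ.sat G t

section Canonical

variable (γ : CRPQ A n) (w : γ.I → List A)

/-- The `k`-th vertex on the path spelling `w i`: its ends are the variables `src i` and
`tgt i`, and its inner vertices are fresh. -/
def canonicalNode (i : γ.I) (k : ℕ) : γ.V ⊕ (γ.I × ℕ) :=
  if k = 0 then .inl (γ.src i) else if (w i).length ≤ k then .inl (γ.tgt i) else .inr (i, k)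

def canonicalDB : DB A where
  V := γ.V ⊕ (γ.I × ℕ)
  edge p c q := ∃ i k, (w i)[k]? = some c ∧ p = γ.canonicalNode w i k ∧
    q = γ.canonicalNode w i (k + 1)

variable {γ w}

@[simp]
theorem canonicalNode_zero (i : γ.I) : γ.canonicalNode w i 0 = .inl (γ.src i) := by
  simp [canonicalNode]

theorem canonicalNode_of_length_le {i : γ.I} {k : ℕ} (hk : k ≠ 0) (h : (w i).length ≤ k) :
    γ.canonicalNode w i k = .inl (γ.tgt i) := by
  simp [canonicalNode, hk, h]

theorem canonicalNode_of_lt_length {i : γ.I} {k : ℕ} (hk : k ≠ 0) (h : k < (w i).length) :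
    γ.canonicalNode w i k = .inr (i, k) := by
  simp [canonicalNode, hk, h.not_ge]

theorem canonicalNode_injOn (i : γ.I) :
    Set.InjOn (γ.canonicalNode w i) (Set.Iio (w i).length) := by
  intro k hk k' hk' h
  rcases Nat.eq_zero_or_pos k with rfl | hk0 <;> rcases Nat.eq_zero_or_pos k' with rfl | hk'0
  · rfl
  · simp [canonicalNode_of_lt_length hk'0.ne' hk'] at h
  · simp [canonicalNode_of_lt_length hk0.ne' hk] at h
  · simpa [canonicalNode_of_lt_length hk0.ne' hk, canonicalNode_of_lt_length hk'0.ne' hk'] using h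

theorem exists_canonicalNode_notMem_range {ι : Type*} [Finite ι]
    (f : ι → γ.V ⊕ (γ.I × ℕ)) (i : γ.I) (h : Nat.card ι < (w i).length) :
    ∃ e < (w i).length, γ.canonicalNode w i e ∉ Set.range f := by
  by_contra! hall
  choose g hg using fun e : Fin (w i).length => hall e e.isLt
  have hinj : Function.Injective g := fun e e' hee' =>
    Fin.ext (canonicalNode_injOn i e.isLt e'.isLt (by rw [← hg, ← hg, hee']))
  simpa using (Nat.card_le_card_of_injective g hinj).trans_lt h

theorem expSat_canonicalDB (hw : ∀ i, w i ≠ []) :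
    γ.expSat w (γ.canonicalDB w) (Sum.inl ∘ γ.out) := by
  refine ⟨Sum.inl, fun _ => rfl, fun i => ?_⟩
  have hlen : (w i).length ≠ 0 := by simpa using hw i
  have h := (DB.path_iff (G := γ.canonicalDB w)).mpr ⟨γ.canonicalNode w i, rfl, rfl,
    fun k hk => ⟨i, k, List.getElem?_eq_getElem hk, rfl, rfl⟩⟩
  rwa [canonicalNode_zero, canonicalNode_of_length_le hlen le_rfl] at h

theorem exists_isHom_canonicalDB_of_expSat {G : DB A} {t : Fin n → G.V} (h : γ.expSat w G t) :
    ∃ ψ, (γ.canonicalDB w).IsHom G ψ ∧ ψ ∘ Sum.inl ∘ γ.out = t := by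
  obtain ⟨h₀, ht, hp⟩ := h
  choose f hf0 hfl hfe using fun i => DB.path_iff.mp (hp i)
  let ψ : γ.V ⊕ (γ.I × ℕ) → G.V := Sum.elim h₀ fun p => f p.1 p.2
  have hψ : ∀ i k, k ≤ (w i).length → ψ (γ.canonicalNode w i k) = f i k := by
    intro i k hk
    rcases Nat.eq_zero_or_pos k with rfl | hk0
    · simp [ψ, hf0]
    rcases hk.eq_or_lt with rfl | hlt
    · simp [ψ, canonicalNode_of_length_le hk0.ne' le_rfl, hfl]
    · simp [ψ, canonicalNode_of_lt_length hk0.ne' hlt]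
  refine ⟨ψ, ?_, funext ht⟩
  rintro _ c _ ⟨i, k, hget, rfl, rfl⟩
  obtain ⟨hk, rfl⟩ := List.getElem?_eq_some_iff.mp hget
  rw [hψ i k hk.le, hψ i (k + 1) hk]
  exact hfe i k hk

theorem expContainedIn_of_sat_canonicalDB {Δ : List (CRPQ A n)}
    (h : ∃ δ ∈ Δ, δ.sat (γ.canonicalDB w) (Sum.inl ∘ γ.out)) : γ.ExpContainedIn w Δ := by
  intro G t hG
  obtain ⟨δ, hδ, hsat⟩ := h
  obtain ⟨ψ, hψ, rfl⟩ := exists_isHom_canonicalDB_of_expSat hG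
  exact ⟨δ, hδ, hsat.map hψ⟩

theorem expContainedIn_iff_sat_canonicalDB {Δ : List (CRPQ A n)} (hw : ∀ i, w i ≠ []) :
    γ.ExpContainedIn w Δ ↔ ∃ δ ∈ Δ, δ.sat (γ.canonicalDB w) (Sum.inl ∘ γ.out) :=
  ⟨fun h => h _ _ (expSat_canonicalDB hw), expContainedIn_of_sat_canonicalDB⟩

end Canonical

section Stretch

variable {γ : CRPQ A n} [DecidableEq γ.I] {w : γ.I → List A} {i₀ : γ.I} {a : A} {m e : ℕ}

/-- The map from the canonical database of `w` to that of `w` with the `e`-th edge of atom `i₀`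
subdivided: inner vertices of atom `i₀` beyond position `e` move one step further. -/
def stretch (i₀ : γ.I) (e : ℕ) : γ.V ⊕ (γ.I × ℕ) → γ.V ⊕ (γ.I × ℕ) :=
  Sum.map id fun p => (p.1, if p.1 = i₀ ∧ e < p.2 then p.2 + 1 else p.2)

theorem stretch_canonicalNode (hw : w i₀ = List.replicate m a) (he : e < m)
    {i : γ.I} {k : ℕ} (hk : k ≤ (w i).length) :
    stretch i₀ e (γ.canonicalNode w i k) =
      γ.canonicalNode (Function.update w i₀ (List.replicate (m + 1) a)) i
        (if i = i₀ ∧ e < k then k + 1 else k) := by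
  by_cases hi : i = i₀
  · subst hi
    simp only [hw, List.length_replicate] at hk
    simp only [canonicalNode, stretch, hw, Function.update_self, List.length_replicate, true_and]
    split_ifs <;> simp_all <;> omega
  · simp only [canonicalNode, stretch, Function.update_of_ne hi, hi, false_and, if_false]
    split_ifs <;> simp [hi]

theorem stretch_edge (hw : w i₀ = List.replicate m a) (he : e < m) {p q : γ.V ⊕ (γ.I × ℕ)}
    {c : A} (h : (γ.canonicalDB w).edge p c q) :
    letI G := γ.canonicalDB (Function.update w i₀ (List.replicate (m + 1) a))
    G.edge (stretch i₀ e p) c (stretch i₀ e q) ∨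
      p = γ.canonicalNode w i₀ e ∧
        ∃ x, G.edge (stretch i₀ e p) c x ∧ G.edge x c (stretch i₀ e q) := by
  obtain ⟨i, k, hget, rfl, rfl⟩ := h
  have hk := (List.getElem?_eq_some_iff.mp hget).1
  rw [stretch_canonicalNode hw he hk.le, stretch_canonicalNode hw he hk]
  by_cases hi : i = i₀
  · subst hi
    have hc : c = a := by
      simp only [hw, List.getElem?_replicate] at hget
      grind
    simp only [hw, List.length_replicate] at hk
    have hget' : ∀ k < m + 1,
        (Function.update w i (List.replicate (m + 1) a) i)[k]? = some c := by
      intro k hk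
      simp [hc, hk]
    rcases eq_or_ne k e with rfl | hke
    · refine .inr ⟨rfl, _, ⟨i, k, hget' k (by omega), by simp, rfl⟩,
        ⟨i, k + 1, hget' (k + 1) (by omega), rfl, by simp⟩⟩
    · refine .inl ⟨i, if e < k then k + 1 else k, hget' _ (by split_ifs <;> omega), by simp, ?_⟩
      simp only [true_and]
      congr 1
      split_ifs <;> omega
  · exact .inl ⟨i, k, by simpa [Function.update_of_ne hi] using hget, by simp [hi], by simp [hi]⟩

/-- Choosing `e` so that no atom of `δ` starts at the `e`-th vertex of atom `i₀`, only atoms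
with an `a⁺` or `A*` language can pass through the subdivided edge. -/
theorem sat_canonicalDB_update_replicate_succ {δ : CRPQ A n}
    (hδ : ∀ j, isLetterLang (δ.lang j) ∨ isPlusLang (δ.lang j) ∨ isStarLang (δ.lang j))
    (hw : w i₀ = List.replicate m a) (hcard : Nat.card δ.I < m)
    (h : δ.sat (γ.canonicalDB w) (Sum.inl ∘ γ.out)) :
    δ.sat (γ.canonicalDB (Function.update w i₀ (List.replicate (m + 1) a))) (Sum.inl ∘ γ.out) := by
  have := δ.finI
  obtain ⟨h₀, hout, hpath⟩ := h
  obtain ⟨e, he, hsrc⟩ :=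
    exists_canonicalNode_notMem_range (w := w) (h₀ ∘ δ.src) i₀ (by simpa [hw] using hcard)
  rw [hw, List.length_replicate] at he
  refine ⟨stretch i₀ e ∘ h₀, fun k => congrArg (stretch i₀ e) (hout k), fun j => ?_⟩
  obtain ⟨u, hu, hp⟩ := hpath j
  have hstretch := hp.stretch fun _ _ _ hpq => (stretch_edge hw he hpq).imp_right And.right
  rcases hδ j with ⟨c, hc⟩ | hplus | hstar
  · rw [hc] at hu ⊢
    subst hu
    refine ⟨[c], rfl, DB.path_singleton.mpr ?_⟩
    rcases stretch_edge hw he (DB.path_singleton.mp hp) with hedge | ⟨hbad, -⟩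
    · exact hedge
    · exact absurd ⟨j, hbad⟩ hsrc
  · obtain ⟨u', hu', hlen, hsub⟩ := hstretch
    exact ⟨u', hplus.mem_of_subset hu hlen hsub, hu'⟩
  · obtain ⟨u', hu', -⟩ := hstretch
    exact ⟨u', hstar ▸ Set.mem_univ u', hu'⟩

end Stretch

variable {γ : CRPQ A n} {Δ : List (CRPQ A n)}

theorem ExpContainedIn.update_replicate_succ [DecidableEq γ.I] {w : γ.I → List A} {i₀ : γ.I}
    {a : A} {m : ℕ}
    (hΔ : ∀ δ ∈ Δ, ∀ j : δ.I,
      isLetterLang (δ.lang j) ∨ isPlusLang (δ.lang j) ∨ isStarLang (δ.lang j))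
    (hne : ∀ i, w i ≠ []) (hw : w i₀ = List.replicate m a) (hm : maxAtoms Δ < m)
    (h : γ.ExpContainedIn w Δ) :
    γ.ExpContainedIn (Function.update w i₀ (List.replicate (m + 1) a)) Δ := by
  obtain ⟨δ, hδ, hsat⟩ := (expContainedIn_iff_sat_canonicalDB hne).mp h
  exact expContainedIn_of_sat_canonicalDB ⟨δ, hδ,
    sat_canonicalDB_update_replicate_succ (hΔ δ hδ) hw ((le_maxAtoms hδ).trans_lt hm) hsat⟩

theorem IsExpansionWords.ne_nil
    (hγ : ∀ i : γ.I, isLetterLang (γ.lang i) ∨ isPlusLang (γ.lang i)) {w : γ.I → List A}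
    (hw : γ.IsExpansionWords w) (i : γ.I) : w i ≠ [] := by
  have hwi := hw i
  rcases hγ i with ⟨c, hc⟩ | ⟨a, ha⟩
  · rw [hc] at hwi
    simp [Set.mem_singleton_iff.mp hwi]
  · rw [ha] at hwi
    exact hwi.1

theorem length_le_of_minimalFor
    (hγ : ∀ i : γ.I, isLetterLang (γ.lang i) ∨ isPlusLang (γ.lang i))
    (hΔ : ∀ δ ∈ Δ, ∀ j : δ.I,
      isLetterLang (δ.lang j) ∨ isPlusLang (δ.lang j) ∨ isStarLang (δ.lang j))
    {w : γ.I → List A}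
    (hmin : MinimalFor (fun w => γ.IsExpansionWords w ∧ ¬ γ.ExpContainedIn w Δ)
      (fun w => ∑ᶠ i, (w i).length) w)
    (i₀ : γ.I) : (w i₀).length ≤ 1 + maxAtoms Δ := by
  classical
  have := γ.finI
  obtain ⟨⟨hw, hcex⟩, hle⟩ := hmin
  rcases hγ i₀ with ⟨c, hc⟩ | ⟨a, ha⟩
  · have hwc : w i₀ = [c] := by simpa [hc] using hw i₀
    simp [hwc]
  by_contra! hlong
  obtain ⟨m, hm⟩ := Nat.exists_eq_add_one_of_ne_zero (n := (w i₀).length) (by omega)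
  have hrep : w i₀ = List.replicate (m + 1) a := by
    rw [← hm]
    have hwi := hw i₀
    rw [ha] at hwi
    exact List.eq_replicate_iff.mpr ⟨rfl, hwi.2⟩
  have hm0 : m ≠ 0 := by omega
  set w' := Function.update w i₀ (List.replicate m a)
  have hw' : γ.IsExpansionWords w' := by
    intro i
    rcases eq_or_ne i i₀ with rfl | hi
    · simp [w', ha, hm0]
    · simpa [w', hi] using hw i
  have hlt : ∑ᶠ i, (w' i).length < ∑ᶠ i, (w i).length :=
    finsum_length_update_lt (by simp [hm])
  have hcont : γ.ExpContainedIn w' Δ := by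
    by_contra hcex'
    exact (hle ⟨hw', hcex'⟩ hlt.le).not_gt hlt
  apply hcex
  simpa [w', ← hrep] using
    hcont.update_replicate_succ (i₀ := i₀) (a := a) (m := m) hΔ (hw'.ne_nil hγ) (by simp [w'])
      (by omega)

end CRPQ

/-- Small counterexample property for UCRPQs over simple regular expressions:
if `Γ` (with atoms `a` or `a⁺`) is not contained in `Δ` (with atoms `a`, `a⁺` or `A*`),
then some expansion of `Γ` of size at most `‖Γ‖·(1+‖Δ‖)` is not contained in `Δ`. -/
theorem sre_small_counterexample {A : Type} {n : ℕ} (Γ Δ : List (CRPQ A n))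
    (hΓ : ∀ γ ∈ Γ, ∀ i : γ.I, isLetterLang (γ.lang i) ∨ isPlusLang (γ.lang i))
    (hΔ : ∀ δ ∈ Δ, ∀ i : δ.I,
      isLetterLang (δ.lang i) ∨ isPlusLang (δ.lang i) ∨ isStarLang (δ.lang i))
    (hnc : ¬ ∀ (G : DB A) (t : Fin n → G.V),
      (∃ γ ∈ Γ, γ.sat G t) → (∃ δ ∈ Δ, δ.sat G t)) :
    ∃ γ ∈ Γ, ∃ w, γ.IsExpansionWords w ∧
      ¬ (∀ (G : DB A) (t : Fin n → G.V), γ.expSat w G t → (∃ δ ∈ Δ, δ.sat G t)) ∧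
      (∑ᶠ i : γ.I, (w i).length) ≤ maxAtoms Γ * (1 + maxAtoms Δ) := by
  push Not at hnc
  obtain ⟨G, t, ⟨γ, hγ, hsat⟩, hno⟩ := hnc
  obtain ⟨w₀, hw₀, hexp⟩ := CRPQ.sat_iff_exists_expSat.mp hsat
  obtain ⟨w, hmin⟩ := exists_minimalFor_of_wellFoundedLT
    (fun w => γ.IsExpansionWords w ∧ ¬ γ.ExpContainedIn w Δ) (fun w => ∑ᶠ i, (w i).length)
    ⟨w₀, hw₀, fun h => by
      obtain ⟨δ, hδ, hδG⟩ := h G t hexp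
      exact hno δ hδ hδG⟩
  have := γ.finI
  refine ⟨γ, hγ, w, hmin.1.1, hmin.1.2, ?_⟩
  calc ∑ᶠ i, (w i).length ≤ Nat.card γ.I * (1 + maxAtoms Δ) :=
        finsum_length_le (CRPQ.length_le_of_minimalFor (hΓ γ hγ) hΔ hmin)
    _ ≤ maxAtoms Γ * (1 + maxAtoms Δ) := Nat.mul_le_mul_right _ (le_maxAtoms hγ)
end
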